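/- arXiv:1802.03233 — 2 statements merged into one kernel-verified Lean document; each statement's English description precedes it below -/
import Mathlib

section
/- Let E be a t-module over K with exponential map exp_E that is a local isometry: there exists ε > 0 such that exp_E restricts to a norm-preserving bijection from the open ball of radius ε in Lie(E)(C_∞) to the open ball of radius ε in E(C_∞). Then applying exp_E coefficient-wise to power series gives a map from Lie(E){{t}} (power series whose coefficient norms tend to 0) to E{{t}} whose kernel is Λ[t], the polynomials with coefficients in the lattice Λ = ker(exp_E). In other words, the exact sequence 0 → Λ → Lie(E)(C_∞) → E(C_∞) induces an exact sequence 0 → Λ[t] → Lie(E){{t}} → E{{t}}. -/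
/-!
A null sequence of coefficients eventually lies in the ball on which `exp_E` preserves norms.
Hence the image sequence is null as well, and a coefficient killed by `exp_E` in that range
has norm `‖exp_E (a i)‖ = 0`, so only finitely many coefficients of a kernel element are nonzero.
-/

open Filter Topology

section LocalIsometry

variable {α E F : Type*} {l : Filter α} {f : E → F} {ε : ℝ} {a : α → E}

theorem eventually_norm_map_eq [Norm E] [Norm F] (hε : 0 < ε)
    (hf : ∀ x, ‖x‖ < ε → ‖f x‖ = ‖x‖) (ha : Tendsto (fun i => ‖a i‖) l (𝓝 0)) :
    ∀ᶠ i in l, ‖f (a i)‖ = ‖a i‖ :=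
  (ha.eventually (eventually_lt_nhds hε)).mono fun _ hi => hf _ hi

theorem tendsto_norm_map_of_norm_map_eq [Norm E] [Norm F] (hε : 0 < ε)
    (hf : ∀ x, ‖x‖ < ε → ‖f x‖ = ‖x‖) (ha : Tendsto (fun i => ‖a i‖) l (𝓝 0)) :
    Tendsto (fun i => ‖f (a i)‖) l (𝓝 0) :=
  ha.congr' ((eventually_norm_map_eq hε hf ha).mono fun _ hi => hi.symm)

theorem eventually_eq_zero_of_map_eq_zero [NormedAddGroup E] [SeminormedAddGroup F] (hε : 0 < ε)
    (hf : ∀ x, ‖x‖ < ε → ‖f x‖ = ‖x‖) (ha : Tendsto (fun i => ‖a i‖) l (𝓝 0))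
    (hker : ∀ i, f (a i) = 0) : ∀ᶠ i in l, a i = 0 := by
  filter_upwards [eventually_norm_map_eq hε hf ha] with i hi
  rwa [hker i, norm_zero, eq_comm, norm_eq_zero] at hi

end LocalIsometry

theorem exp_coefficientwise_kernel_general
    {C : Type*} [NontriviallyNormedField C] (d : ℕ)
    (expE : (Fin d → C) → (Fin d → C))
    (ε : ℝ) (hε : 0 < ε)
    (hisom : ∀ x, ‖x‖ < ε → ‖expE x‖ = ‖x‖) :
    (∀ a : ℕ → (Fin d → C),
      Tendsto (fun i => ‖a i‖) atTop (nhds 0) →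
        Tendsto (fun i => ‖expE (a i)‖) atTop (nhds 0)) ∧
    (∀ a : ℕ → (Fin d → C),
      Tendsto (fun i => ‖a i‖) atTop (nhds 0) →
        ((∀ i, expE (a i) = 0) ↔
          ((∀ i, expE (a i) = 0) ∧ ∃ n : ℕ, ∀ i ≥ n, a i = 0))) :=
  ⟨fun _ ha => tendsto_norm_map_of_norm_map_eq hε hisom ha, fun _ ha =>
    ⟨fun hker => ⟨hker, eventually_atTop.mp (eventually_eq_zero_of_map_eq_zero hε hisom ha hker)⟩,
      And.left⟩⟩

/-- Let `E` be a `t`-module over `K ⊆ C_∞` of dimension `d`, with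
`E(C_∞) ≅ Lie(E)(C_∞) ≅ C_∞^d` (sup-norm) and exponential map `expE` which is
`F_q`-linear (in particular additive) and a local isometry: there is `ε > 0` such
that `expE` restricts to a norm-preserving bijection between the `ε`-balls around `0`.
Let `Λ = ker(expE)` be the period lattice.

STATEMENT: applying `expE` coefficient-wise maps `Lie(E){{t}}` (power series whose
coefficient norms tend to `0`) into `E{{t}}`, and the kernel of this map is `Λ[t]`,
the polynomials with coefficients in `Λ`; i.e. the exponential sequence
`0 → Λ → Lie(E)(C_∞) → E(C_∞)` induces an exact sequence
`0 → Λ[t] → Lie(E){{t}} → E{{t}}`. -/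
theorem exp_coefficientwise_kernel
    {C : Type*} [NontriviallyNormedField C] [CompleteSpace C] (d : ℕ)
    (expE : (Fin d → C) → (Fin d → C))
    (hadd : ∀ x y, expE (x + y) = expE x + expE y)
    (ε : ℝ) (hε : 0 < ε)
    (hisom : ∀ x, ‖x‖ < ε → ‖expE x‖ = ‖x‖)
    (hsurj : ∀ y, ‖y‖ < ε → ∃ x, ‖x‖ < ε ∧ expE x = y) :
    (∀ a : ℕ → (Fin d → C),
      Tendsto (fun i => ‖a i‖) atTop (nhds 0) →
        Tendsto (fun i => ‖expE (a i)‖) atTop (nhds 0)) ∧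
    (∀ a : ℕ → (Fin d → C),
      Tendsto (fun i => ‖a i‖) atTop (nhds 0) →
        ((∀ i, expE (a i) = 0) ↔
          ((∀ i, expE (a i) = 0) ∧ ∃ n : ℕ, ∀ i ≥ n, a i = 0))) :=
  exp_coefficientwise_kernel_general d expE ε hε hisom
end

section
/- Let E be a t-module over C_∞ of dimension d, with exponential map exp_E a local isometry, and let dφ_t = θ + N with N nilpotent on Lie(E)(C_∞) ≅ C_∞^d and |θ| > 1. Then the map δ: Λ → H sending a period λ to Σ_{i≥0} exp_E(dφ_t^{-i-1}(λ)) t^i is a well-defined isomorphism of F_q[t]-modules from the period lattice Λ = ker(exp_E) to H = {Σ e_i t^i ∈ E{{t}} : φ_t(e_i) applied coefficient-wise equals the shift, i.e. φ_t(h) = h·t}. -/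
/-!
Write `S = dφ_t⁻¹`. Since `θ S = 1 + M` with `M` nilpotent and the norm is ultrametric, the
vectors `(θ S)ᵐ λ` stay bounded, so `Sᵐ λ → 0` geometrically. Hence the coefficients
`exp_E (S^(i+1) λ)` of `δ(λ)` tend to `0`, and `exp_E ∘ dφ_t = φ_t ∘ exp_E` turns
`dφ_t S^(i+1) = S^i` into the shift relation. If `δ(λ) = δ(μ)`, `exp_E` kills every
`Sᵐ (λ - μ)`; these are eventually small, hence zero, since `exp_E` is isometric near `0`.
Conversely, the tail of `h ∈ H` lies where `exp_E` is a bijective isometry; small preimages `x_j`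
of `h_j` satisfy `dφ_t x_{j+1} = x_j` for large `j` by injectivity, so `x_j = S^(j+1) λ` for a
single `λ`, and the shift relation carries `δ(λ)_j = h_j` down to all `j`.
-/

open Filter Finset Topology

section Unipotent

variable {R V : Type*} [Ring R] [SeminormedAddCommGroup V] [IsUltrametricDist V] [Module R V]

theorem norm_one_add_pow_apply_le {M : Module.End R V} {d : ℕ} (hM : M ^ d = 0) (m : ℕ) (y : V) :
    ‖((1 + M) ^ m) y‖ ≤ ∑ k ∈ range d, ‖(M ^ k) y‖ := by
  have hc : 0 ≤ ∑ k ∈ range d, ‖(M ^ k) y‖ := sum_nonneg fun _ _ ↦ norm_nonneg _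
  have hexp : ((1 + M) ^ m) y = ∑ k ∈ range (m + 1), m.choose k • (M ^ k) y := by
    rw [add_comm, (Commute.one_right M).add_pow]
    simp [LinearMap.coe_sum, Module.End.mul_apply, Module.End.natCast_apply, map_nsmul]
  rw [hexp]
  refine IsUltrametricDist.norm_sum_le_of_forall_le_of_nonneg hc fun k _ ↦ ?_
  rcases lt_or_ge k d with hk | hk
  · exact (IsUltrametricDist.norm_nsmul_le _ _).trans
      (single_le_sum (f := fun j ↦ ‖(M ^ j) y‖) (fun _ _ ↦ norm_nonneg _) (mem_range.mpr hk))
  · simp [pow_eq_zero_of_le hk hM, hc]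

end Unipotent

theorem LinearEquiv.smul_symm_sub_one_pow_eq_zero {R V : Type*} [CommRing R] [AddCommGroup V]
    [Module R V] (A : V ≃ₗ[R] V) (θ : R) {d : ℕ}
    (hN : ((A : V →ₗ[R] V) - θ • (LinearMap.id : V →ₗ[R] V)) ^ d = 0) :
    (θ • (A.symm : V →ₗ[R] V) - 1) ^ d = 0 := by
  set S : Module.End R V := (A.symm : V →ₗ[R] V)
  have hAS : (A : Module.End R V) * S = 1 := by ext; simp [S]
  have hSA : S * (A : Module.End R V) = 1 := by ext; simp [S]
  have hcomm : Commute (θ • 1 - (A : Module.End R V)) S := by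
    simp only [Commute, SemiconjBy, sub_mul, mul_sub, hAS, hSA, smul_mul_assoc, mul_smul_comm,
      one_mul, mul_one]
  have key : θ • S - 1 = (θ • 1 - (A : Module.End R V)) * S := by
    rw [sub_mul, hAS, smul_mul_assoc, one_mul]
  rw [← Module.End.one_eq_id] at hN
  rw [key, hcomm.mul_pow, ← neg_sub, neg_pow, hN, mul_zero, zero_mul]

theorem LinearEquiv.tendsto_norm_symm_pow_apply {𝕜 V : Type*} [NormedField 𝕜]
    [SeminormedAddCommGroup V] [IsUltrametricDist V] [NormedSpace 𝕜 V] (A : V ≃ₗ[𝕜] V) {θ : 𝕜}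
    (hθ : 1 < ‖θ‖) {d : ℕ} (hN : ((A : V →ₗ[𝕜] V) - θ • (LinearMap.id : V →ₗ[𝕜] V)) ^ d = 0)
    (x : V) : Tendsto (fun m ↦ ‖(A.symm ^ m) x‖) atTop (𝓝 0) := by
  set M : Module.End 𝕜 V := θ • (A.symm : V →ₗ[𝕜] V) - 1
  set c := ∑ k ∈ range d, ‖(M ^ k) x‖
  have hbound (m : ℕ) : ‖(A.symm ^ m) x‖ ≤ c * ‖θ‖⁻¹ ^ m := by
    have hpow : ((1 + M) ^ m) x = θ ^ m • (A.symm ^ m) x := by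
      rw [add_sub_cancel, smul_pow, LinearMap.smul_apply,
        ← LinearEquiv.automorphismGroup.toLinearMapMonoidHom_apply, ← map_pow]
      rfl
    have h := norm_one_add_pow_apply_le (A.smul_symm_sub_one_pow_eq_zero θ hN) m x
    rw [hpow, norm_smul, norm_pow] at h
    rw [inv_pow, ← div_eq_mul_inv, le_div_iff₀ (pow_pos (one_pos.trans hθ) m)]
    linarith
  refine squeeze_zero (fun _ ↦ norm_nonneg _) hbound ?_
  simpa using (tendsto_pow_atTop_nhds_zero_of_lt_one (by positivity)
    (inv_lt_one_of_one_lt₀ hθ)).const_mul c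

theorem LinearEquiv.apply_symm_pow_succ {R V : Type*} [Semiring R] [AddCommMonoid V] [Module R V]
    (A : V ≃ₗ[R] V) (n : ℕ) (x : V) : A ((A.symm ^ (n + 1)) x) = (A.symm ^ n) x := by
  rw [pow_succ', LinearEquiv.mul_apply, apply_symm_apply]

theorem LinearEquiv.symm_pow_succ_apply_self {R V : Type*} [Semiring R] [AddCommMonoid V]
    [Module R V] (A : V ≃ₗ[R] V) (n : ℕ) (x : V) : (A.symm ^ (n + 1)) (A x) = (A.symm ^ n) x := by
  rw [pow_succ, LinearEquiv.mul_apply, symm_apply_apply]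

theorem LinearEquiv.exists_symm_pow_succ_eq {R V : Type*} [Semiring R] [AddCommMonoid V]
    [Module R V] (A : V ≃ₗ[R] V) {x : ℕ → V} (hx : ∀ᶠ j in atTop, A (x (j + 1)) = x j) :
    ∃ lam, ∀ᶠ j in atTop, (A.symm ^ (j + 1)) lam = x j := by
  obtain ⟨i, hi⟩ := eventually_atTop.mp hx
  refine ⟨(A ^ (i + 1)) (x i), eventually_atTop.mpr ⟨i, fun j hj ↦ ?_⟩⟩
  induction j, hj using Nat.le_induction with
  | base =>
    change (A⁻¹ ^ (i + 1)) _ = _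
    rw [inv_pow, ← LinearEquiv.mul_apply, inv_mul_cancel]
    rfl
  | succ j hj ih => rw [pow_succ', LinearEquiv.mul_apply, ih, ← hi j hj, symm_apply_apply]

theorem eq_of_eventuallyEq_of_map_succ {α : Type*} {F : α → α} {f g : ℕ → α}
    (hf : ∀ n, F (f (n + 1)) = f n) (hg : ∀ n, F (g (n + 1)) = g n) (hfg : f =ᶠ[atTop] g) :
    f = g := by
  obtain ⟨i, hi⟩ := eventually_atTop.mp hfg
  have key (k : ℕ) : ∀ n, i ≤ n + k → f n = g n := by
    induction k with
    | zero => exact hi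
    | succ k ih => exact fun n hn ↦ by rw [← hf, ← hg, ih (n + 1) (by omega)]
  exact funext fun n ↦ key i n (by omega)

section PeriodSeries

variable {R V W : Type*} [Semiring R] [AddCommMonoid V] [Module R V]

/-- The coefficients of `δ(λ) = ∑ᵢ e(A⁻ⁱ⁻¹ λ) tⁱ`. -/
def periodSeries (A : V ≃ₗ[R] V) (e : V → W) (lam : V) : ℕ → W :=
  fun i ↦ e ((A.symm ^ (i + 1)) lam)

variable {A : V ≃ₗ[R] V} {e : V → W} {φ : W → W}

theorem map_periodSeries_succ (hcomm : ∀ x, e (A x) = φ (e x)) (lam : V) (n : ℕ) :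
    φ (periodSeries A e lam (n + 1)) = periodSeries A e lam n := by
  simp only [periodSeries, ← hcomm, A.apply_symm_pow_succ]

theorem map_periodSeries_zero (hcomm : ∀ x, e (A x) = φ (e x)) (lam : V) :
    φ (periodSeries A e lam 0) = e lam := by
  rw [periodSeries, ← hcomm, A.apply_symm_pow_succ, pow_zero]
  rfl

end PeriodSeries

/-- The coefficient sequences of the series `h ∈ E{{t}}` with `φ(h) = h t`. -/
def shiftInvariantSeries {W : Type*} [SeminormedAddCommGroup W] (φ : W → W) : Set (ℕ → W) :=
  {h | Tendsto (fun i ↦ ‖h i‖) atTop (𝓝 0) ∧ ∀ n, φ (h n) = if n = 0 then 0 else h (n - 1)}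

section LocalIsometry

variable {R V W : Type*} [Ring R] [NormedAddCommGroup V] [Module R V] [SeminormedAddCommGroup W]
  {A : V ≃ₗ[R] V} {φ : W → W} {ε : ℝ}

theorem periodSeries_mem_shiftInvariantSeries {e : V → W} (hcomm : ∀ x, e (A x) = φ (e x))
    (hε : 0 < ε) (hisom : ∀ x, ‖x‖ < ε → ‖e x‖ = ‖x‖)
    (hdecay : ∀ x, Tendsto (fun m ↦ ‖(A.symm ^ m) x‖) atTop (𝓝 0)) {lam : V} (hlam : e lam = 0) :
    periodSeries A e lam ∈ shiftInvariantSeries φ := by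
  have hsucc := (hdecay lam).comp (tendsto_add_atTop_nat 1)
  refine ⟨hsucc.congr' ?_, fun n ↦ ?_⟩
  · filter_upwards [hsucc.eventually_lt_const hε] with i hi
    exact (hisom _ hi).symm
  · cases n with
    | zero => rw [map_periodSeries_zero hcomm, hlam, if_pos rfl]
    | succ n => rw [map_periodSeries_succ hcomm, if_neg n.succ_ne_zero, Nat.add_sub_cancel]

theorem injOn_periodSeries (e : V →+ W) (hε : 0 < ε) (hisom : ∀ x, ‖x‖ < ε → ‖e x‖ = ‖x‖)
    (hdecay : ∀ x, Tendsto (fun m ↦ ‖(A.symm ^ m) x‖) atTop (𝓝 0)) :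
    Set.InjOn (periodSeries A e) {x | e x = 0} := by
  intro lam hlam mu hmu heq
  have hzero : ∀ m, e ((A.symm ^ m) (lam - mu)) = 0 := by
    rintro (_ | m)
    · simp [map_sub, hlam.out, hmu.out]
    · rw [map_sub, map_sub, sub_eq_zero]
      exact congrFun heq m
  obtain ⟨m, hm⟩ := ((hdecay (lam - mu)).eventually_lt_const hε).exists
  have hnorm : ‖(A.symm ^ m) (lam - mu)‖ = 0 := by rw [← hisom _ hm, hzero, norm_zero]
  rwa [norm_eq_zero, map_eq_zero_iff _ (A.symm ^ m).injective, sub_eq_zero] at hnorm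

theorem injOn_ball_of_norm_map_eq [IsUltrametricDist V] (e : V →+ W)
    (hisom : ∀ x, ‖x‖ < ε → ‖e x‖ = ‖x‖) : Set.InjOn e (Metric.ball 0 ε) := by
  intro u hu v hv huv
  have hlt : ‖u - v‖ < ε := by
    rw [Metric.mem_ball] at hu hv
    rw [← dist_eq_norm]
    exact (IsUltrametricDist.dist_triangle_max u 0 v).trans_lt (max_lt hu (dist_comm v 0 ▸ hv))
  rw [← sub_eq_zero, ← norm_eq_zero, ← hisom _ hlt, map_sub, huv, sub_self, norm_zero]

theorem exists_tendsto_zero_lift {e : V → W} (hε : 0 < ε) (hisom : ∀ x, ‖x‖ < ε → ‖e x‖ = ‖x‖)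
    (hsurj : ∀ y, ‖y‖ < ε → ∃ x, ‖x‖ < ε ∧ e x = y) {h : ℕ → W}
    (hh : Tendsto (fun i ↦ ‖h i‖) atTop (𝓝 0)) :
    ∃ x : ℕ → V, Tendsto x atTop (𝓝 0) ∧ ∀ᶠ j in atTop, ‖x j‖ < ε ∧ e (x j) = h j := by
  have hlift (j : ℕ) : ∃ x : V, ‖h j‖ < ε → ‖x‖ < ε ∧ e x = h j := by
    by_cases hj : ‖h j‖ < ε
    · exact (hsurj _ hj).imp fun _ hx _ ↦ hx
    · exact ⟨0, fun hj' ↦ absurd hj' hj⟩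
  choose x hx using hlift
  have hev : ∀ᶠ j in atTop, ‖x j‖ < ε ∧ e (x j) = h j :=
    (hh.eventually_lt_const hε).mono fun j hj ↦ hx j hj
  refine ⟨x, tendsto_zero_iff_norm_tendsto_zero.mpr (hh.congr' ?_), hev⟩
  filter_upwards [hev] with j hj
  rw [← hisom _ hj.1, hj.2]

theorem surjOn_periodSeries [IsUltrametricDist V] (e : V →+ W) (hA : Continuous A)
    (hcomm : ∀ x, e (A x) = φ (e x)) (hε : 0 < ε) (hisom : ∀ x, ‖x‖ < ε → ‖e x‖ = ‖x‖)
    (hsurj : ∀ y, ‖y‖ < ε → ∃ x, ‖x‖ < ε ∧ e x = y) :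
    Set.SurjOn (periodSeries A e) {x | e x = 0} (shiftInvariantSeries φ) := by
  rintro h ⟨hh, hshift⟩
  have hshift_succ (n : ℕ) : φ (h (n + 1)) = h n := by simpa using hshift (n + 1)
  obtain ⟨x, hx, hlift⟩ := exists_tendsto_zero_lift hε hisom hsurj hh
  have hAx : Tendsto (fun j ↦ A (x (j + 1))) atTop (𝓝 0) :=
    (hA.tendsto' 0 0 (map_zero A)).comp (hx.comp (tendsto_add_atTop_nat 1))
  have hcompat : ∀ᶠ j in atTop, A (x (j + 1)) = x j := by
    filter_upwards [hlift, (tendsto_add_atTop_nat 1).eventually hlift,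
      hAx.eventually (Metric.ball_mem_nhds 0 hε)] with j hj hj1 hAj
    refine injOn_ball_of_norm_map_eq e hisom hAj (mem_ball_zero_iff.mpr hj.1) ?_
    rw [hcomm, hj1.2, hshift_succ, hj.2]
  obtain ⟨lam, hlam⟩ := A.exists_symm_pow_succ_eq hcompat
  have heq : periodSeries A e lam = h := by
    refine eq_of_eventuallyEq_of_map_succ (map_periodSeries_succ hcomm lam) hshift_succ ?_
    filter_upwards [hlam, hlift] with j hj hj'
    rw [periodSeries, hj, hj'.2]
  refine ⟨lam, ?_, heq⟩
  rw [Set.mem_ofPred_eq, ← map_periodSeries_zero hcomm, heq, hshift, if_pos rfl]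

end LocalIsometry

theorem delta_iso_lattice_to_H_general
    {C : Type*} [NontriviallyNormedField C] [IsUltrametricDist C]
    (d : ℕ) (A : (Fin d → C) ≃ₗ[C] (Fin d → C)) (θ : C) (hθ : 1 < ‖θ‖)
    (hN : ((A : (Fin d → C) →ₗ[C] (Fin d → C)) -
        θ • (LinearMap.id : (Fin d → C) →ₗ[C] (Fin d → C))) ^ d = 0)
    (φt : (Fin d → C) → (Fin d → C))
    (expE : (Fin d → C) → (Fin d → C))
    (hadd : ∀ x y, expE (x + y) = expE x + expE y)
    (hcomm : ∀ x, expE (A x) = φt (expE x))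
    (ε : ℝ) (hε : 0 < ε)
    (hisom : ∀ x, ‖x‖ < ε → ‖expE x‖ = ‖x‖)
    (hsurj : ∀ y, ‖y‖ < ε → ∃ x, ‖x‖ < ε ∧ expE x = y) :
    (∀ lam ∈ {x | expE x = 0}, (fun i : ℕ => expE ((A.symm ^ (i + 1)) lam)) ∈
        {h : ℕ → (Fin d → C) |
          Tendsto (fun i => ‖h i‖) atTop (nhds 0) ∧
          ∀ n : ℕ, φt (h n) = if n = 0 then 0 else h (n - 1)}) ∧
    (∀ lam ∈ {x | expE x = 0}, ∀ mu ∈ {x | expE x = 0}, ∀ i : ℕ,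
      expE ((A.symm ^ (i + 1)) (lam + mu)) =
        expE ((A.symm ^ (i + 1)) lam) + expE ((A.symm ^ (i + 1)) mu)) ∧
    (∀ lam ∈ {x | expE x = 0}, ∀ i : ℕ,
      expE ((A.symm ^ (i + 1)) (A lam)) = φt (expE ((A.symm ^ (i + 1)) lam))) ∧
    Set.BijOn (fun lam => fun i : ℕ => expE ((A.symm ^ (i + 1)) lam))
      {x | expE x = 0}
      {h : ℕ → (Fin d → C) |
        Tendsto (fun i => ‖h i‖) atTop (nhds 0) ∧
        ∀ n : ℕ, φt (h n) = if n = 0 then 0 else h (n - 1)} := by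
  let e : (Fin d → C) →+ (Fin d → C) := AddMonoidHom.mk' expE hadd
  have hdecay := A.tendsto_norm_symm_pow_apply hθ hN
  have hmaps : ∀ lam ∈ {x | expE x = 0}, periodSeries A expE lam ∈ shiftInvariantSeries φt :=
    fun _ hlam ↦ periodSeries_mem_shiftInvariantSeries hcomm hε hisom hdecay hlam
  refine ⟨hmaps, fun lam _ mu _ i ↦ by rw [map_add, hadd], fun lam _ i ↦ ?_, hmaps,
    injOn_periodSeries e hε hisom hdecay,
    surjOn_periodSeries e (LinearMap.continuous_on_pi _) hcomm hε hisom hsurj⟩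
  rw [A.symm_pow_succ_apply_self, ← A.apply_symm_pow_succ, hcomm]

/-- Let `C = C_∞` be a complete nonarchimedean valued field, `E` a `t`-module of
dimension `d` over `C` with `E(C_∞) ≅ Lie(E)(C_∞) ≅ C^d` (sup-norm).  Let
`A = dφ_t` (an invertible linear map, `A = θ + N` with `N` nilpotent, `N^d = 0`,
`|θ| > 1`), `φt = φ_t` the `t`-action on `E(C_∞)` (additive), and `expE` the
exponential: additive, satisfying `expE ∘ dφ_t = φ_t ∘ expE`, and a local isometry.
Let `Λ = ker(expE)` and
`H = {Σ e_i t^i ∈ E{{t}} : φ_t(h) = h·t}` (coefficient norms tending to `0`,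
coefficient-wise `φ_t`-action equal to the shift).

STATEMENT: `δ : λ ↦ Σ_{i≥0} expE(dφ_t^{-i-1}(λ)) t^i` is a well-defined
isomorphism of `F_q[t]`-modules `Λ → H`: it maps `Λ` into `H`, is additive,
intertwines the `t`-action `dφ_t` on `Λ` with the `t`-action `φ_t` on `H`,
and is a bijection from `Λ` onto `H`. -/
theorem delta_iso_lattice_to_H
    {C : Type*} [NontriviallyNormedField C] [CompleteSpace C] [IsUltrametricDist C]
    (d : ℕ) (A : (Fin d → C) ≃ₗ[C] (Fin d → C)) (θ : C) (hθ : 1 < ‖θ‖)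
    (hN : ((A : (Fin d → C) →ₗ[C] (Fin d → C)) -
        θ • (LinearMap.id : (Fin d → C) →ₗ[C] (Fin d → C))) ^ d = 0)
    (φt : (Fin d → C) → (Fin d → C)) (hφadd : ∀ x y, φt (x + y) = φt x + φt y)
    (expE : (Fin d → C) → (Fin d → C))
    (hadd : ∀ x y, expE (x + y) = expE x + expE y)
    (hcomm : ∀ x, expE (A x) = φt (expE x))
    (ε : ℝ) (hε : 0 < ε)
    (hisom : ∀ x, ‖x‖ < ε → ‖expE x‖ = ‖x‖)
    (hsurj : ∀ y, ‖y‖ < ε → ∃ x, ‖x‖ < ε ∧ expE x = y) :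
    (∀ lam ∈ {x | expE x = 0}, (fun i : ℕ => expE ((A.symm ^ (i + 1)) lam)) ∈
        {h : ℕ → (Fin d → C) |
          Tendsto (fun i => ‖h i‖) atTop (nhds 0) ∧
          ∀ n : ℕ, φt (h n) = if n = 0 then 0 else h (n - 1)}) ∧
    (∀ lam ∈ {x | expE x = 0}, ∀ mu ∈ {x | expE x = 0}, ∀ i : ℕ,
      expE ((A.symm ^ (i + 1)) (lam + mu)) =
        expE ((A.symm ^ (i + 1)) lam) + expE ((A.symm ^ (i + 1)) mu)) ∧
    (∀ lam ∈ {x | expE x = 0}, ∀ i : ℕ,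
      expE ((A.symm ^ (i + 1)) (A lam)) = φt (expE ((A.symm ^ (i + 1)) lam))) ∧
    Set.BijOn (fun lam => fun i : ℕ => expE ((A.symm ^ (i + 1)) lam))
      {x | expE x = 0}
      {h : ℕ → (Fin d → C) |
        Tendsto (fun i => ‖h i‖) atTop (nhds 0) ∧
        ∀ n : ℕ, φt (h n) = if n = 0 then 0 else h (n - 1)} :=
  delta_iso_lattice_to_H_general d A θ hθ hN φt expE hadd hcomm ε hε hisom hsurj
end
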